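/- arXiv:1306.5931 — 7 statements merged into one kernel-verified Lean document; each statement's English description precedes it below -/
import Mathlib

section
/- With notation as in the evolution system ω' = -2p, g' = -2q, J = g⁻¹ω, assume J(0)² = -I. Then J(t)² = -I for all t if and only if P^c(t) = Q^c(t) for all t (equivalently q^c = p^c(·,J·) for all t), where P^c, Q^c are the J(t)-invariant parts of P(t), Q(t). -/
open ContinuousLinearMap

/-!
Differentiating `ω = g(J·,·)` and cancelling the nondegenerate form `g` gives `J' = -2R` with
`R = JP - QJ`. Hence `K = J² + 1` satisfies `K' = -2(RJ + JR)`, and in any ring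
`RJ + JR = KP - QK - ((P - JPJ) - (Q - JQJ))`. If `J² ≡ -1`, then `K ≡ 0` and `K' = 0` give
`P - JPJ = Q - JQJ`. Conversely, if these agree, `K` solves the linear equation `K' = 2QK - 2KP`
with `K(0) = 0`, so `K ≡ 0` by Grönwall's inequality.
-/

section Gronwall

variable {E : Type*} [NormedAddCommGroup E] [NormedSpace ℝ E]

theorem eq_zero_of_norm_deriv_le_mul_norm_of_le {f f' : ℝ → E} {b : ℝ → ℝ} {a t : ℝ}
    (hf : ∀ s, HasDerivAt f (f' s) s) (hb : Continuous b)
    (hbound : ∀ s, ‖f' s‖ ≤ b s * ‖f s‖) (ha : f a = 0) (hat : a ≤ t) : f t = 0 := by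
  obtain ⟨C, hC⟩ := (isCompact_Icc (a := a) (b := t)).bddAbove_image hb.continuousOn
  refine eq_zero_of_abs_deriv_le_mul_abs_self_of_eq_zero_right (K := C)
    (fun s _ => (hf s).continuousAt.continuousWithinAt) (fun s _ => (hf s).hasDerivWithinAt) ha
    (fun s hs => ?_) t ⟨hat, le_rfl⟩
  exact (hbound s).trans <| mul_le_mul_of_nonneg_right
    (hC (Set.mem_image_of_mem b (Set.Ico_subset_Icc_self hs))) (norm_nonneg _)

theorem eq_zero_of_norm_deriv_le_mul_norm {f f' : ℝ → E} {b : ℝ → ℝ} {a : ℝ}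
    (hf : ∀ s, HasDerivAt f (f' s) s) (hb : Continuous b)
    (hbound : ∀ s, ‖f' s‖ ≤ b s * ‖f s‖) (ha : f a = 0) (t : ℝ) : f t = 0 := by
  rcases le_total a t with hat | hta
  · exact eq_zero_of_norm_deriv_le_mul_norm_of_le hf hb hbound ha hat
  · have hrev (s : ℝ) : HasDerivAt (fun u => f (-u)) (-f' (-s)) s := by
      simpa [Function.comp_def] using (hf (-s)).scomp s (hasDerivAt_neg s)
    simpa using eq_zero_of_norm_deriv_le_mul_norm_of_le (f := fun u => f (-u)) hrev
      (hb.comp continuous_neg) (fun s => by simpa using hbound (-s)) (by simpa using ha)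
      (neg_le_neg hta)

end Gronwall

theorem eq_zero_of_hasDerivAt_mul_add_mul {A : Type*} [NormedRing A] [NormedSpace ℝ A]
    {K B C : ℝ → A} {a : ℝ} (hK : ∀ t, HasDerivAt K (B t * K t + K t * C t) t)
    (hB : Continuous B) (hC : Continuous C) (ha : K a = 0) (t : ℝ) : K t = 0 := by
  refine eq_zero_of_norm_deriv_le_mul_norm hK (hB.norm.add hC.norm) (fun s => ?_) ha t
  calc ‖B s * K s + K s * C s‖ ≤ ‖B s‖ * ‖K s‖ + ‖K s‖ * ‖C s‖ :=
        (norm_add_le _ _).trans (add_le_add (norm_mul_le _ _) (norm_mul_le _ _))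
    _ = (‖B s‖ + ‖C s‖) * ‖K s‖ := by ring

theorem twisted_commutator_anticomm {A : Type*} [Ring A] (J P Q : A) :
    (J * P - Q * J) * J + J * (J * P - Q * J) =
      (J * J + 1) * P - Q * (J * J + 1) - ((P - J * P * J) - (Q - J * Q * J)) := by
  noncomm_ring

section Bilinear

variable {V : Type*} [NormedAddCommGroup V] [NormedSpace ℝ V]

theorem ContinuousLinearMap.injective_of_pos_diag {g : V →L[ℝ] V →L[ℝ] ℝ}
    (hg : ∀ X, X ≠ 0 → 0 < g X X) : Function.Injective g :=
  (injective_iff_map_eq_zero g).2 fun X hX => by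
    by_contra hX0
    simpa [hX] using hg X hX0

theorem deriv_eq_neg_two_smul_of_hasDerivAt_comp {g : ℝ → V →L[ℝ] V →L[ℝ] ℝ}
    {J P Q : ℝ → V →L[ℝ] V} {Jd : V →L[ℝ] V} {t : ℝ} (hg : ∀ X, X ≠ 0 → 0 < g t X X)
    (hω' : HasDerivAt (fun s => g s ∘L J s) ((-2 : ℝ) • (g t ∘L J t ∘L P t)) t)
    (hg' : HasDerivAt g ((-2 : ℝ) • (g t ∘L Q t)) t) (hJ' : HasDerivAt J Jd t) :
    Jd = (-2 : ℝ) • (J t * P t - Q t * J t) := by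
  have h := hω'.unique (hg'.clm_comp hJ')
  ext1 X
  apply ContinuousLinearMap.injective_of_pos_diag hg
  have hX := congr($h X)
  simp only [smul_apply, comp_apply, add_apply] at hX
  simp only [smul_apply, sub_apply, mul_apply_eq_comp, map_smul, map_sub]
  linear_combination (norm := module) -hX

end Bilinear

theorem compatibility_preserved_iff_general {V : Type*} [NormedAddCommGroup V]
    [InnerProductSpace ℝ V]
    (ω g p q : ℝ → (V →L[ℝ] V →L[ℝ] ℝ)) (J P Q Jd : ℝ → (V →L[ℝ] V))
    (hωJ : ∀ (t : ℝ) (X Y : V), ω t X Y = g t (J t X) Y)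
    (hgpos : ∀ (t : ℝ) (X : V), X ≠ 0 → 0 < g t X X)
    (hp : ∀ (t : ℝ) (X Y : V), p t X Y = ω t (P t X) Y)
    (hq : ∀ (t : ℝ) (X Y : V), q t X Y = g t (Q t X) Y)
    (hω' : ∀ t : ℝ, HasDerivAt ω ((-2 : ℝ) • p t) t)
    (hg' : ∀ t : ℝ, HasDerivAt g ((-2 : ℝ) • q t) t)
    (hJ' : ∀ t : ℝ, HasDerivAt J (Jd t) t)
    (hPcont : Continuous P) (hQcont : Continuous Q)
    (hJ0 : J 0 ∘L J 0 = -1) :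
    (∀ t : ℝ, J t ∘L J t = -1) ↔
      (∀ t : ℝ, P t - J t ∘L P t ∘L J t = Q t - J t ∘L Q t ∘L J t) := by
  have hω : ω = fun s => g s ∘L J s := funext fun s => by ext X Y; exact hωJ s X Y
  have hp' (t : ℝ) : p t = g t ∘L J t ∘L P t := by ext X Y; simp [hp, hωJ]
  have hq' (t : ℝ) : q t = g t ∘L Q t := by ext X Y; exact hq t X Y
  have hJd (t : ℝ) : Jd t = (-2 : ℝ) • (J t * P t - Q t * J t) :=
    deriv_eq_neg_two_smul_of_hasDerivAt_comp (hgpos t) (hω ▸ hp' t ▸ hω' t) (hq' t ▸ hg' t)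
      (hJ' t)
  have hK' (t : ℝ) : HasDerivAt (fun s => J s * J s + 1) ((-2 : ℝ) •
      ((J t * J t + 1) * P t - Q t * (J t * J t + 1) -
        ((P t - J t * P t * J t) - (Q t - J t * Q t * J t)))) t := by
    rw [← twisted_commutator_anticomm, smul_add, ← smul_mul_assoc, ← mul_smul_comm, ← hJd]
    exact ((hJ' t).fun_mul (hJ' t)).add_const 1
  simp only [← mul_def, ← mul_assoc] at hJ0 ⊢
  constructor
  · intro hJ2 t
    have hK : (fun s => J s * J s + 1) = fun _ => 0 :=
      funext fun s => by rw [hJ2 s, neg_add_cancel]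
    have hK'0 := (hK' t).unique (hK ▸ hasDerivAt_const t 0)
    simpa [hJ2 t, sub_eq_zero, eq_comm] using hK'0
  · intro hc t
    refine eq_neg_of_add_eq_zero_left (eq_zero_of_hasDerivAt_mul_add_mul
      (K := fun s => J s * J s + 1) (B := fun s => (2 : ℝ) • Q s) (C := fun s => (-2 : ℝ) • P s)
      (fun s => ?_) (by fun_prop) (by fun_prop) (by rw [hJ0, neg_add_cancel]) t)
    refine (hK' s).congr_deriv ?_
    rw [hc s, sub_self, sub_zero, smul_mul_assoc, mul_smul_comm]
    module

/-- Along a solution of `ω' = -2p`, `g' = -2q` with `ω = g(J·,·)` and `J(0)² = -I`,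
compatibility is preserved, i.e. `J(t)² = -I` for all `t`, if and only if
`P^c(t) = Q^c(t)` for all `t` (the `J(t)`-invariant parts of `P`, `Q` coincide). -/
theorem compatibility_preserved_iff {V : Type*} [NormedAddCommGroup V]
    [InnerProductSpace ℝ V] [FiniteDimensional ℝ V]
    (ω g p q : ℝ → (V →L[ℝ] V →L[ℝ] ℝ)) (J P Q Jd : ℝ → (V →L[ℝ] V))
    (hωJ : ∀ (t : ℝ) (X Y : V), ω t X Y = g t (J t X) Y)
    (hgpos : ∀ (t : ℝ) (X : V), X ≠ 0 → 0 < g t X X)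
    (hp : ∀ (t : ℝ) (X Y : V), p t X Y = ω t (P t X) Y)
    (hq : ∀ (t : ℝ) (X Y : V), q t X Y = g t (Q t X) Y)
    (hω' : ∀ t : ℝ, HasDerivAt ω ((-2 : ℝ) • p t) t)
    (hg' : ∀ t : ℝ, HasDerivAt g ((-2 : ℝ) • q t) t)
    (hJ' : ∀ t : ℝ, HasDerivAt J (Jd t) t)
    (hPcont : Continuous P) (hQcont : Continuous Q)
    (hJ0 : J 0 ∘L J 0 = -1) :
    (∀ t : ℝ, J t ∘L J t = -1) ↔
      (∀ t : ℝ, P t - J t ∘L P t ∘L J t = Q t - J t ∘L Q t ∘L J t) :=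
  compatibility_preserved_iff_general ω g p q J P Q Jd hωJ hgpos hp hq hω' hg' hJ' hPcont hQcont hJ0
end

section
/- Suppose the compatibility condition P^c = Q^c holds along a solution of ω' = -2p, g' = -2q with J² = -I. Then the almost-complex structure evolves by J' = -2J(P^{ac} + Q^{ac}). -/
open ContinuousLinearMap

/-! Differentiating `ω = g(J·,·)` gives `g(J'X, Y) = -2 p(X, Y) + 2 q(JX, Y)`, so by nondegeneracy
of `g` we get `J' = -2JP + 2QJ`. Multiplying `P - JPJ = Q - JQJ` on the left by `J` and using
`J² = -1` gives `JP + PJ = JQ + QJ`, which is exactly what turns `-2JP + 2QJ` into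
`-2J(P^{ac} + Q^{ac}) = -JP + PJ - JQ + QJ`. -/

theorem mul_add_mul_eq_of_sub_conj_eq {R : Type*} [Ring R] {J A B : R} (hJ : J * J = -1)
    (h : A - J * (A * J) = B - J * (B * J)) : J * A + A * J = J * B + B * J := by
  have hJA : ∀ X : R, J * (X - J * (X * J)) = J * X + X * J := fun X => by
    rw [mul_sub, ← mul_assoc, hJ, neg_one_mul, sub_neg_eq_add]
  rw [← hJA, h, hJA]

theorem smul_mul_add_smul_mul_eq_of_sub_conj_eq {A : Type*} [Ring A] [Algebra ℝ A] {J P Q : A}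
    (hJ : J * J = -1) (h : P - J * (P * J) = Q - J * (Q * J)) :
    (-2 : ℝ) • (J * P) + (2 : ℝ) • (Q * J) =
      (-2 : ℝ) • (J * ((1/2 : ℝ) • (P + J * (P * J)) + (1/2 : ℝ) • (Q + J * (Q * J)))) := by
  have hJJ : ∀ X : A, J * (J * X) = -X := fun X => by rw [← mul_assoc, hJ, neg_one_mul]
  have hPJ : P * J = J * Q + Q * J - J * P := by
    rw [← mul_add_mul_eq_of_sub_conj_eq hJ h]; abel
  rw [mul_add, mul_smul_comm, mul_smul_comm, mul_add, mul_add, hJJ, hJJ, hPJ]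
  module

namespace ContinuousLinearMap

variable {𝕜 E F G : Type*} [NontriviallyNormedField 𝕜]
  [NormedAddCommGroup E] [NormedSpace 𝕜 E] [NormedAddCommGroup F] [NormedSpace 𝕜 F]
  [NormedAddCommGroup G] [NormedSpace 𝕜 G]

theorem injective_of_apply_self_pos [PartialOrder 𝕜] (g : E →L[𝕜] E →L[𝕜] 𝕜)
    (hg : ∀ x, x ≠ 0 → 0 < g x x) : Function.Injective g :=
  (injective_iff_map_eq_zero g).2 fun x hx => by
    by_contra hx0
    exact (hg x hx0).ne' (by rw [hx, zero_apply])

theorem comp_deriv_eq_of_hasDerivAt {c : 𝕜 → F →L[𝕜] G} {d : 𝕜 → E →L[𝕜] F}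
    {b : 𝕜 → E →L[𝕜] G} {b' : E →L[𝕜] G} {c' : F →L[𝕜] G} {d' : E →L[𝕜] F} {t : 𝕜}
    (hb_eq : ∀ s, b s = (c s).comp (d s)) (hb : HasDerivAt b b' t) (hc : HasDerivAt c c' t)
    (hd : HasDerivAt d d' t) : (c t).comp d' = b' - c'.comp (d t) := by
  have hb' : HasDerivAt b (c'.comp (d t) + (c t).comp d') t := by
    simpa only [← funext hb_eq] using hc.clm_comp hd
  rw [hb.unique hb', add_sub_cancel_left]

end ContinuousLinearMap

theorem J_evolution_ac_general {V : Type*} [NormedAddCommGroup V] [InnerProductSpace ℝ V]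
    (ω g p q : ℝ → (V →L[ℝ] V →L[ℝ] ℝ)) (J P Q Jd : ℝ → (V →L[ℝ] V))
    (hωJ : ∀ (t : ℝ) (X Y : V), ω t X Y = g t (J t X) Y)
    (hgpos : ∀ (t : ℝ) (X : V), X ≠ 0 → 0 < g t X X)
    (hp : ∀ (t : ℝ) (X Y : V), p t X Y = ω t (P t X) Y)
    (hq : ∀ (t : ℝ) (X Y : V), q t X Y = g t (Q t X) Y)
    (hω' : ∀ t : ℝ, HasDerivAt ω ((-2 : ℝ) • p t) t)
    (hg' : ∀ t : ℝ, HasDerivAt g ((-2 : ℝ) • q t) t)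
    (hJ' : ∀ t : ℝ, HasDerivAt J (Jd t) t)
    (hJ2 : ∀ t : ℝ, J t ∘L J t = -1)
    -- compatibility `P^c = Q^c`
    (hcomp : ∀ t : ℝ, P t - J t ∘L P t ∘L J t = Q t - J t ∘L Q t ∘L J t) :
    ∀ t : ℝ, Jd t = (-2 : ℝ) • (J t ∘L
      ((1/2 : ℝ) • (P t + J t ∘L P t ∘L J t) + (1/2 : ℝ) • (Q t + J t ∘L Q t ∘L J t))) := by
  intro t
  have hω_eq : ∀ s, ω s = (g s).comp (J s) := fun s => by ext X Y; exact hωJ s X Y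
  have hleibniz := comp_deriv_eq_of_hasDerivAt hω_eq (hω' t) (hg' t) (hJ' t)
  have hJd : Jd t = (-2 : ℝ) • (J t ∘L P t) + (2 : ℝ) • (Q t ∘L J t) := by
    refine cancel_left (injective_of_apply_self_pos (g t) (hgpos t)) ?_
    ext X Y
    have := congr($hleibniz X Y)
    simp only [comp_apply, sub_apply, smul_apply, add_apply, map_add, map_smul, hp, hq, hωJ,
      smul_eq_mul] at this ⊢
    linarith
  rw [hJd]
  exact smul_mul_add_smul_mul_eq_of_sub_conj_eq (hJ2 t) (hcomp t)

/-- If the compatibility `P^c = Q^c` holds along a solution of `ω' = -2p`, `g' = -2q`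
with `J² = -I`, then `J' = -2J(P^{ac} + Q^{ac})`. -/
theorem J_evolution_ac {V : Type*} [NormedAddCommGroup V] [InnerProductSpace ℝ V]
    [FiniteDimensional ℝ V]
    (ω g p q : ℝ → (V →L[ℝ] V →L[ℝ] ℝ)) (J P Q Jd : ℝ → (V →L[ℝ] V))
    (hωJ : ∀ (t : ℝ) (X Y : V), ω t X Y = g t (J t X) Y)
    (hgpos : ∀ (t : ℝ) (X : V), X ≠ 0 → 0 < g t X X)
    (hp : ∀ (t : ℝ) (X Y : V), p t X Y = ω t (P t X) Y)
    (hq : ∀ (t : ℝ) (X Y : V), q t X Y = g t (Q t X) Y)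
    (hω' : ∀ t : ℝ, HasDerivAt ω ((-2 : ℝ) • p t) t)
    (hg' : ∀ t : ℝ, HasDerivAt g ((-2 : ℝ) • q t) t)
    (hJ' : ∀ t : ℝ, HasDerivAt J (Jd t) t)
    (hJ2 : ∀ t : ℝ, J t ∘L J t = -1)
    -- compatibility `P^c = Q^c`
    (hcomp : ∀ t : ℝ, P t - J t ∘L P t ∘L J t = Q t - J t ∘L Q t ∘L J t) :
    ∀ t : ℝ, Jd t = (-2 : ℝ) • (J t ∘L
      ((1/2 : ℝ) • (P t + J t ∘L P t ∘L J t) + (1/2 : ℝ) • (Q t + J t ∘L Q t ∘L J t))) :=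
  J_evolution_ac_general ω g p q J P Q Jd hωJ hgpos hp hq hω' hg' hJ' hJ2 hcomp
end

section
/- Let μ(t) be a curve of bilinear alternating maps on ℝ^{2n} solving the bracket flow μ' = δ_μ(P_μ + Q_μ^{ac}) with μ(0) = [·,·] a Lie bracket, where the curvature operators satisfy the scaling law P_{cμ} + Q_{cμ}^{ac} = c²(P_μ + Q_μ^{ac}). If the maximal forward existence time T₊ is finite, then |μ(t)| ≥ C/(T₊ - t)^{1/2} for all t ∈ [0, T₊), for some constant C > 0 depending only on n. More precisely, one has |μ'| ≤ C₂|μ|³ and hence |μ(t)|² ≤ 1/(-2C₂(t-t₀) + |μ(t₀)|⁻²). -/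
open ContinuousLinearMap

/-- `δ_μ(A)(X,Y) = μ(AX,Y) + μ(X,AY) - Aμ(X,Y)`. -/
noncomputable def bracketDelta {V : Type*} [NormedAddCommGroup V] [NormedSpace ℝ V]
    (μ : V →L[ℝ] V →L[ℝ] V) (A : V →L[ℝ] V) : V →L[ℝ] V →L[ℝ] V :=
  μ.comp A + (μ.flip.comp A).flip - (ContinuousLinearMap.compL ℝ V V V A).comp μ

/-!
Since `E_μ` is continuous and homogeneous of degree two in `μ`, `‖δ_μ(E_μ)‖ ≤ C₂‖μ‖³`. Along
any curve with `‖μ'‖ ≤ C₂‖μ‖³`, comparison with the solutions `(A - 2C₂t)^{-1/2}` of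
`y' = C₂y³` shows that `‖μ‖⁻²` decreases at rate at most `2C₂`. In particular a zero of `μ`
persists, which blow-up rules out, and letting `t` tend to `T₊`, where `‖μ‖⁻² → 0`, gives
`‖μ(t)‖⁻² ≤ 2C₂(T₊ - t)`.
-/

open Set Filter Topology

theorem HasDerivAt.inv_sqrt {D : ℝ → ℝ} {D' x : ℝ} (hD : HasDerivAt D D' x) (hx : 0 < D x) :
    HasDerivAt (fun y => (√(D y))⁻¹) (-(D' / 2) * (√(D x))⁻¹ ^ 3) x := by
  have hs : 0 < √(D x) := Real.sqrt_pos.2 hx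
  refine ((hD.sqrt hx.ne').inv hs.ne').congr_deriv ?_
  field_simp

section CubicGrowth

variable {E : Type*} [NormedAddCommGroup E] [NormedSpace ℝ E] {f φ : ℝ → E} {a b C : ℝ}

/- The barrier `(A - 2K(x - a))^{-1/2}` solves `y' = Ky³`; the fencing theorem needs the
strict `C < K`. -/
theorem norm_le_inv_sqrt_of_norm_deriv_le_cube_of_lt {K A : ℝ} (hab : a ≤ b)
    (hd : ∀ x ∈ Icc a b, HasDerivAt f (φ x) x) (hb : ∀ x ∈ Icc a b, ‖φ x‖ ≤ C * ‖f x‖ ^ 3)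
    (hC : 0 ≤ C) (hCK : C < K) (hA : 2 * K * (b - a) < A) (ha : ‖f a‖ ≤ (√A)⁻¹) :
    ‖f b‖ ≤ (√(A - 2 * K * (b - a)))⁻¹ := by
  have hD : ∀ x ∈ Icc a b, 0 < A - 2 * K * (x - a) := fun x hx => by
    nlinarith [hx.2]
  have hB : ∀ x ∈ Icc a b, HasDerivAt (fun y => (√(A - 2 * K * (y - a)))⁻¹)
      (K * (√(A - 2 * K * (x - a)))⁻¹ ^ 3) x := fun x hx => by
    have hlin : HasDerivAt (fun y => A - 2 * K * (y - a)) (-(2 * K)) x := by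
      simpa using ((hasDerivAt_id x).sub_const a).const_mul (2 * K) |>.const_sub A
    exact (hlin.inv_sqrt (hD x hx)).congr_deriv (by ring)
  refine image_norm_le_of_norm_deriv_right_lt_deriv_boundary'
    (fun x hx => (hd x hx).continuousAt.continuousWithinAt)
    (fun x hx => (hd x (Ico_subset_Icc_self hx)).hasDerivWithinAt) (by simpa using ha)
    (fun x hx => (hB x hx).continuousAt.continuousWithinAt)
    (fun x hx => (hB x (Ico_subset_Icc_self hx)).hasDerivWithinAt) ?_ (right_mem_Icc.2 hab)
  intro x hx hfx
  have hpos : 0 < ‖f x‖ := hfx ▸ inv_pos.2 (Real.sqrt_pos.2 (hD x (Ico_subset_Icc_self hx)))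
  calc ‖φ x‖ ≤ C * ‖f x‖ ^ 3 := hb x (Ico_subset_Icc_self hx)
    _ < K * ‖f x‖ ^ 3 := by gcongr
    _ = _ := by rw [hfx]

theorem norm_le_inv_sqrt_of_norm_deriv_le_cube {A : ℝ} (hab : a ≤ b)
    (hd : ∀ x ∈ Icc a b, HasDerivAt f (φ x) x) (hb : ∀ x ∈ Icc a b, ‖φ x‖ ≤ C * ‖f x‖ ^ 3)
    (hC : 0 ≤ C) (hA : 2 * C * (b - a) < A) (ha : ‖f a‖ ≤ (√A)⁻¹) :
    ‖f b‖ ≤ (√(A - 2 * C * (b - a)))⁻¹ := by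
  have hcont : Continuous fun K : ℝ => A - 2 * K * (b - a) := by fun_prop
  have hlim : Tendsto (fun K : ℝ => (√(A - 2 * K * (b - a)))⁻¹) (𝓝[>] C)
      (𝓝 (√(A - 2 * C * (b - a)))⁻¹) :=
    ((hcont.sqrt.continuousAt.inv₀ (Real.sqrt_pos.2 (by linarith)).ne').tendsto).mono_left
      nhdsWithin_le_nhds
  have hnear : ∀ᶠ K in 𝓝[>] C, 0 < A - 2 * K * (b - a) :=
    nhdsWithin_le_nhds (continuousAt_const.eventually_lt hcont.continuousAt (by linarith))
  refine ge_of_tendsto hlim ?_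
  filter_upwards [hnear, self_mem_nhdsWithin] with K hK hCK
  exact norm_le_inv_sqrt_of_norm_deriv_le_cube_of_lt hab hd hb hC hCK (by linarith) ha

theorem eq_zero_of_norm_deriv_le_cube (hab : a ≤ b)
    (hd : ∀ x ∈ Icc a b, HasDerivAt f (φ x) x) (hb : ∀ x ∈ Icc a b, ‖φ x‖ ≤ C * ‖f x‖ ^ 3)
    (hC : 0 ≤ C) (ha : f a = 0) : f b = 0 := by
  have hlim : Tendsto (fun c : ℝ => (√c)⁻¹) atTop (𝓝 0) :=
    tendsto_inv_atTop_zero.comp Real.tendsto_sqrt_atTop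
  refine norm_le_zero_iff.1 (ge_of_tendsto hlim ?_)
  filter_upwards [eventually_gt_atTop 0] with c hc
  have h := norm_le_inv_sqrt_of_norm_deriv_le_cube (A := 2 * C * (b - a) + c) hab hd hb hC
    (by linarith) (by rw [ha, norm_zero]; positivity)
  rwa [add_sub_cancel_left] at h

theorem inv_norm_sq_sub_le_of_norm_deriv_le_cube (hab : a ≤ b)
    (hd : ∀ x ∈ Icc a b, HasDerivAt f (φ x) x) (hb : ∀ x ∈ Icc a b, ‖φ x‖ ≤ C * ‖f x‖ ^ 3)
    (hC : 0 ≤ C) (hfb : f b ≠ 0) :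
    (‖f a‖ ^ 2)⁻¹ - 2 * C * (b - a) ≤ (‖f b‖ ^ 2)⁻¹ := by
  set A := (‖f a‖ ^ 2)⁻¹
  rcases le_or_gt A (2 * C * (b - a)) with hA | hA
  · have : 0 ≤ (‖f b‖ ^ 2)⁻¹ := by positivity
    linarith
  have ha : ‖f a‖ ≤ (√A)⁻¹ := by
    rw [Real.sqrt_inv, Real.sqrt_sq (norm_nonneg _), inv_inv]
  have hbound := pow_le_pow_left₀ (norm_nonneg _)
    (norm_le_inv_sqrt_of_norm_deriv_le_cube hab hd hb hC hA ha) 2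
  rw [inv_pow, Real.sq_sqrt (by linarith)] at hbound
  exact (le_inv_comm₀ (pow_pos (norm_pos_iff.2 hfb) 2) (by linarith)).1 hbound

theorem ne_zero_of_norm_deriv_le_cube_of_tendsto_atTop {T : ℝ}
    (hd : ∀ x ∈ Ico a T, HasDerivAt f (φ x) x) (hb : ∀ x ∈ Ico a T, ‖φ x‖ ≤ C * ‖f x‖ ^ 3)
    (hC : 0 ≤ C) (hblow : Tendsto (fun t => ‖f t‖) (𝓝[<] T) atTop) :
    ∀ t ∈ Ico a T, f t ≠ 0 := by
  intro t ht hft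
  obtain ⟨s, hs, hst⟩ := ((hblow.eventually_gt_atTop 0).and
    (Ioo_mem_nhdsLT_of_mem ⟨ht.2, le_rfl⟩)).exists
  have hsub : Icc t s ⊆ Ico a T := Icc_subset_Ico ht.1 hst.2
  have := eq_zero_of_norm_deriv_le_cube hst.1.le (fun x hx => hd x (hsub hx))
    (fun x hx => hb x (hsub hx)) hC hft
  simp [this] at hs

end CubicGrowth

theorem inv_sq_le_of_tendsto_atTop {u : ℝ → ℝ} {C t T : ℝ} (ht : t < T)
    (hdecay : ∀ s ∈ Ico t T, (u t ^ 2)⁻¹ - 2 * C * (s - t) ≤ (u s ^ 2)⁻¹)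
    (hblow : Tendsto u (𝓝[<] T) atTop) :
    (u t ^ 2)⁻¹ ≤ 2 * C * (T - t) := by
  have hlim : Tendsto (fun s => (u s ^ 2)⁻¹ + 2 * C * (s - t)) (𝓝[<] T)
      (𝓝 (0 + 2 * C * (T - t))) :=
    (((tendsto_pow_atTop two_ne_zero).comp hblow).inv_tendsto_atTop).add
      ((by fun_prop : Continuous fun s : ℝ => 2 * C * (s - t)).continuousAt.tendsto.mono_left
        nhdsWithin_le_nhds)
  rw [zero_add] at hlim
  refine ge_of_tendsto hlim ?_
  filter_upwards [Ioo_mem_nhdsLT_of_mem ⟨ht, le_rfl⟩] with s hs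
  linarith [hdecay s ⟨hs.1.le, hs.2⟩]

theorem inv_sqrt_div_sqrt_le_of_inv_sq_le {u c d : ℝ} (hu : 0 < u) (hc : 0 ≤ c)
    (h : (u ^ 2)⁻¹ ≤ c * d) : (√c)⁻¹ / √d ≤ u := by
  have hcd : 0 < c * d := lt_of_lt_of_le (by positivity) h
  rw [div_eq_mul_inv, ← mul_inv, ← Real.sqrt_mul hc, ← Real.sqrt_inv, ← Real.sqrt_sq hu.le]
  exact Real.sqrt_le_sqrt ((inv_le_comm₀ (by positivity) hcd).1 h)

theorem exists_norm_le_mul_norm_sq_of_homogeneous {E F : Type*} [NormedAddCommGroup E]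
    [NormedSpace ℝ E] [ProperSpace E] [NormedAddCommGroup F] [NormedSpace ℝ F] {g : E → F}
    (hg : Continuous g) (hhom : ∀ (c : ℝ) x, g (c • x) = c ^ 2 • g x) :
    ∃ C > 0, ∀ x, ‖g x‖ ≤ C * ‖x‖ ^ 2 := by
  obtain ⟨M, hM⟩ := (isCompact_sphere (0 : E) 1).exists_bound_of_continuousOn hg.continuousOn
  refine ⟨max M 1, by positivity, fun x => ?_⟩
  rcases eq_or_ne x 0 with rfl | hx
  · simpa using hhom 0 0
  have hr : 0 < ‖x‖ := norm_pos_iff.2 hx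
  have hunit : ‖x‖⁻¹ • x ∈ Metric.sphere (0 : E) 1 := by
    simp [norm_smul, hr.ne']
  have hscale : g x = ‖x‖ ^ 2 • g (‖x‖⁻¹ • x) := by
    rw [← hhom, smul_smul, mul_inv_cancel₀ hr.ne', one_smul]
  rw [hscale, norm_smul, Real.norm_eq_abs, abs_of_nonneg (by positivity), mul_comm]
  gcongr
  exact (hM _ hunit).trans (le_max_left M 1)

theorem norm_bracketDelta_le {V : Type*} [NormedAddCommGroup V] [NormedSpace ℝ V]
    (μ : V →L[ℝ] V →L[ℝ] V) (A : V →L[ℝ] V) :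
    ‖bracketDelta μ A‖ ≤ 3 * ‖μ‖ * ‖A‖ := by
  have h₁ : ‖μ.comp A‖ ≤ ‖μ‖ * ‖A‖ := opNorm_comp_le _ _
  have h₂ : ‖(μ.flip.comp A).flip‖ ≤ ‖μ‖ * ‖A‖ := by
    rw [opNorm_flip]
    exact (opNorm_comp_le _ _).trans_eq (by rw [opNorm_flip])
  have h₃ : ‖(compL ℝ V V V A).comp μ‖ ≤ ‖A‖ * ‖μ‖ :=
    (opNorm_comp_le _ _).trans (by
      gcongr
      exact opNorm_le_bound _ (norm_nonneg A) fun g => opNorm_comp_le _ _)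
  calc ‖bracketDelta μ A‖
      ≤ ‖μ.comp A + (μ.flip.comp A).flip‖ + ‖(compL ℝ V V V A).comp μ‖ :=
        norm_sub_le (μ.comp A + (μ.flip.comp A).flip) ((compL ℝ V V V A).comp μ)
    _ ≤ ‖μ.comp A‖ + ‖(μ.flip.comp A).flip‖ + ‖(compL ℝ V V V A).comp μ‖ := by
        gcongr; exact norm_add_le (μ.comp A) ((μ.flip.comp A).flip)
    _ ≤ 3 * ‖μ‖ * ‖A‖ := by linarith

theorem exists_norm_bracketDelta_le_mul_norm_cube {V : Type*} [NormedAddCommGroup V]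
    [NormedSpace ℝ V] [FiniteDimensional ℝ V]
    {A : (V →L[ℝ] V →L[ℝ] V) → (V →L[ℝ] V)} (hA : Continuous A)
    (hhom : ∀ (c : ℝ) μ, A (c • μ) = c ^ 2 • A μ) :
    ∃ C > 0, ∀ μ, ‖bracketDelta μ (A μ)‖ ≤ C * ‖μ‖ ^ 3 := by
  have := FiniteDimensional.proper ℝ (V →L[ℝ] V →L[ℝ] V)
  obtain ⟨C, hC, hAC⟩ := exists_norm_le_mul_norm_sq_of_homogeneous (g := A) hA hhom
  refine ⟨3 * C, by positivity, fun μ => ?_⟩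
  calc ‖bracketDelta μ (A μ)‖ ≤ 3 * ‖μ‖ * ‖A μ‖ := norm_bracketDelta_le _ _
    _ ≤ 3 * ‖μ‖ * (C * ‖μ‖ ^ 2) := by gcongr; exact hAC μ
    _ = 3 * C * ‖μ‖ ^ 3 := by ring

theorem bracket_flow_lower_bound_general (n : ℕ) (T : ℝ)
    (μ : ℝ → (EuclideanSpace ℝ (Fin (2*n)) →L[ℝ] EuclideanSpace ℝ (Fin (2*n))
      →L[ℝ] EuclideanSpace ℝ (Fin (2*n))))
    (Efun : (EuclideanSpace ℝ (Fin (2*n)) →L[ℝ] EuclideanSpace ℝ (Fin (2*n))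
      →L[ℝ] EuclideanSpace ℝ (Fin (2*n))) →
      (EuclideanSpace ℝ (Fin (2*n)) →L[ℝ] EuclideanSpace ℝ (Fin (2*n))))
    (hEcont : Continuous Efun)
    (hEscal : ∀ (c : ℝ) lam, Efun (c • lam) = c^2 • Efun lam)
    -- the bracket flow on `[0, T₊)`
    (hflow : ∀ t ∈ Set.Ico (0:ℝ) T, HasDerivAt μ (bracketDelta (μ t) (Efun (μ t))) t)
    -- `‖μ‖` blows up at the finite singularity `T₊ = T`
    (hblow : Filter.Tendsto (fun t => ‖μ t‖) (nhdsWithin T (Set.Iio T)) Filter.atTop) :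
    (∃ C > 0, ∀ t ∈ Set.Ico (0:ℝ) T, C / Real.sqrt (T - t) ≤ ‖μ t‖) ∧
    (∃ C₂ > 0,
      (∀ t ∈ Set.Ico (0:ℝ) T, ‖bracketDelta (μ t) (Efun (μ t))‖ ≤ C₂ * ‖μ t‖^3) ∧
      (∀ t₀ ∈ Set.Ico (0:ℝ) T, ∀ t ∈ Set.Ico t₀ T,
        (‖μ t₀‖^2)⁻¹ - 2*C₂*(t - t₀) ≤ (‖μ t‖^2)⁻¹)) := by
  obtain ⟨C₂, hC₂, hcube⟩ := exists_norm_bracketDelta_le_mul_norm_cube hEcont hEscal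
  set φ := fun t => bracketDelta (μ t) (Efun (μ t))
  have hbound : ∀ t ∈ Ico (0 : ℝ) T, ‖φ t‖ ≤ C₂ * ‖μ t‖ ^ 3 := fun t _ => hcube (μ t)
  have hne : ∀ t ∈ Ico (0 : ℝ) T, μ t ≠ 0 :=
    ne_zero_of_norm_deriv_le_cube_of_tendsto_atTop (φ := φ) hflow hbound hC₂.le hblow
  have hdecay : ∀ t₀ ∈ Ico (0 : ℝ) T, ∀ t ∈ Ico t₀ T,
      (‖μ t₀‖ ^ 2)⁻¹ - 2 * C₂ * (t - t₀) ≤ (‖μ t‖ ^ 2)⁻¹ := by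
    intro t₀ ht₀ t ht
    have hsub : Icc t₀ t ⊆ Ico 0 T := Icc_subset_Ico ht₀.1 ht.2
    exact inv_norm_sq_sub_le_of_norm_deriv_le_cube (φ := φ) ht.1 (fun x hx => hflow x (hsub hx))
      (fun x hx => hbound x (hsub hx)) hC₂.le (hne t (hsub (right_mem_Icc.2 ht.1)))
  refine ⟨⟨(√(2 * C₂))⁻¹, by positivity, fun t ht => ?_⟩, C₂, hC₂, hbound, hdecay⟩
  exact inv_sqrt_div_sqrt_le_of_inv_sq_le ((norm_pos_iff (a := μ t)).2 (hne t ht)) (by positivity)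
    (inv_sq_le_of_tendsto_atTop ht.2 (hdecay t ht) hblow)

/-- If the bracket flow `μ' = δ_μ(P_μ + Q_μ^{ac})` on `ℝ^{2n}` (with the scaling law
`E_{cμ} = c²E_μ` for `E_μ := P_μ + Q_μ^{ac}`) has a finite maximal forward existence
time `T₊` (so that `‖μ‖` blows up at `T₊`), then `‖μ(t)‖ ≥ C/(T₊-t)^{1/2}`; more
precisely `‖μ'‖ ≤ C₂‖μ‖³` and `‖μ(t)‖⁻² ≥ ‖μ(t₀)‖⁻² - 2C₂(t-t₀)`. -/
theorem bracket_flow_lower_bound (n : ℕ) (hn : 0 < n) (T : ℝ) (hT : 0 < T)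
    (μ : ℝ → (EuclideanSpace ℝ (Fin (2*n)) →L[ℝ] EuclideanSpace ℝ (Fin (2*n))
      →L[ℝ] EuclideanSpace ℝ (Fin (2*n))))
    (Efun : (EuclideanSpace ℝ (Fin (2*n)) →L[ℝ] EuclideanSpace ℝ (Fin (2*n))
      →L[ℝ] EuclideanSpace ℝ (Fin (2*n))) →
      (EuclideanSpace ℝ (Fin (2*n)) →L[ℝ] EuclideanSpace ℝ (Fin (2*n))))
    (hEcont : Continuous Efun)
    (hEscal : ∀ (c : ℝ) lam, Efun (c • lam) = c^2 • Efun lam)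
    -- `μ(0)` is a Lie bracket
    (halt : ∀ X, μ 0 X X = 0)
    (hjac : ∀ X Y Z, μ 0 X (μ 0 Y Z) + μ 0 Y (μ 0 Z X) + μ 0 Z (μ 0 X Y) = 0)
    -- the bracket flow on `[0, T₊)`
    (hflow : ∀ t ∈ Set.Ico (0:ℝ) T, HasDerivAt μ (bracketDelta (μ t) (Efun (μ t))) t)
    -- `‖μ‖` blows up at the finite singularity `T₊ = T`
    (hblow : Filter.Tendsto (fun t => ‖μ t‖) (nhdsWithin T (Set.Iio T)) Filter.atTop) :
    (∃ C > 0, ∀ t ∈ Set.Ico (0:ℝ) T, C / Real.sqrt (T - t) ≤ ‖μ t‖) ∧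
    (∃ C₂ > 0,
      (∀ t ∈ Set.Ico (0:ℝ) T, ‖bracketDelta (μ t) (Efun (μ t))‖ ≤ C₂ * ‖μ t‖^3) ∧
      (∀ t₀ ∈ Set.Ico (0:ℝ) T, ∀ t ∈ Set.Ico t₀ T,
        (‖μ t₀‖^2)⁻¹ - 2*C₂*(t - t₀) ≤ (‖μ t‖^2)⁻¹)) :=
  bracket_flow_lower_bound_general n T μ Efun hEcont hEscal hflow hblow
end

section
/- Let (ω, g) be an almost-hermitian structure on a Lie algebra g whose curvature operators satisfy P + Q^{ac} = cI + D for some c ∈ ℝ and derivation D of g. Then (ω,g) is a (p,q)-soliton with the same c and D, i.e. P = cI + (1/2)(D - JD^tJ) and Q = cI + (1/2)(D + D^t). -/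
/-!
In the *-algebra `End(g)`, whose star is the `g`-transpose, transposing
`P + Q^{ac} = cI + D` gives `-JPJ + Q^{ac} = cI + D^t`; conjugating that by `J` gives the
`ω`-transpose `P - Q^{ac} = cI - JD^tJ`. Averaging the first and the last yields `P`, while
`Q = Q^c + Q^{ac} = P^c + Q^{ac}` is the average of the first two.
-/

section ComplexStructure

variable {A : Type*} [Ring A] {J : A}

theorem conj_conj_of_mul_self_eq_neg_one (hJ : J * J = -1) (X : A) :
    J * (J * X * J) * J = X := calc
  _ = (J * J) * X * (J * J) := by simp only [mul_assoc]
  _ = X := by rw [hJ, neg_one_mul, mul_neg_one, neg_neg]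

variable [StarRing A]

theorem star_conj_of_star_eq_neg (hJs : star J = -J) (X : A) :
    star (J * X * J) = J * star X * J := by
  simp only [star_mul, hJs, neg_mul, mul_neg, neg_neg, mul_assoc]

variable [Algebra ℝ A] [StarModule ℝ A]

theorem soliton_of_add_anticommuting_part_eq (hJ : J * J = -1) (hJs : star J = -J)
    {P Q D : A} {c : ℝ}
    (hPt : star P = -(J * P * J)) (hQt : star Q = Q)
    (hcomp : P - J * P * J = Q - J * Q * J)
    (hyp : P + (1/2 : ℝ) • (Q + J * Q * J) = c • 1 + D) :
    P = c • 1 + (1/2 : ℝ) • (D - J * star D * J) ∧ Q = c • 1 + (1/2 : ℝ) • (D + star D) := by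
  have transpose : -(J * P * J) + (1/2 : ℝ) • (Q + J * Q * J) = c • 1 + star D := by
    simpa only [star_add, star_smul, star_trivial, star_one, hPt, hQt,
      star_conj_of_star_eq_neg hJs] using congrArg star hyp
  have omega_transpose : P - (1/2 : ℝ) • (Q + J * Q * J) = c • 1 - J * star D * J := by
    have := congrArg (fun X => -(J * X * J)) transpose
    simp only [mul_add, add_mul, mul_neg, neg_mul, mul_smul_comm, smul_mul_assoc, mul_one, hJ,
      conj_conj_of_mul_self_eq_neg_one hJ] at this
    linear_combination (norm := module) this
  constructor
  · linear_combination (norm := module) (1/2 : ℝ) • (hyp + omega_transpose)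
  · linear_combination (norm := module) (1/2 : ℝ) • (hyp + transpose - hcomp)

end ComplexStructure

theorem algebraic_soliton_general {V : Type*} [NormedAddCommGroup V] [InnerProductSpace ℝ V]
    [FiniteDimensional ℝ V]
    -- the Lie bracket
    (L : V →L[ℝ] V →L[ℝ] V)
    (J P Q D : V →L[ℝ] V) (c : ℝ)
    (hJ2 : J ∘L J = -1)
    (hJadj : ContinuousLinearMap.adjoint J = -J)
    -- `P^{t_ω} = P`, i.e. `P^t = -JPJ`
    (hPt : ContinuousLinearMap.adjoint P = -(J ∘L P ∘L J))
    -- `Q^t = Q`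
    (hQt : ContinuousLinearMap.adjoint Q = Q)
    -- compatibility `P^c = Q^c`
    (hcomp : P - J ∘L P ∘L J = Q - J ∘L Q ∘L J)
    -- the hypothesis `P + Q^{ac} = cI + D`
    (hyp : P + (1/2 : ℝ) • (Q + J ∘L Q ∘L J) = c • (1 : V →L[ℝ] V) + D) :
    P = c • (1 : V →L[ℝ] V)
        + (1/2 : ℝ) • (D - J ∘L (ContinuousLinearMap.adjoint D) ∘L J) ∧
    Q = c • (1 : V →L[ℝ] V) + (1/2 : ℝ) • (D + ContinuousLinearMap.adjoint D) :=
  -- in `V →L[ℝ] V`, `*` is `∘L` and `star` is `adjoint` definitionally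
  soliton_of_add_anticommuting_part_eq hJ2 hJadj hPt hQt hcomp hyp

/-- Proposition 6.4 of the paper: if `P + Q^{ac} = cI + D` for a derivation `D`, then
`(ω, g)` is a `(p,q)`-soliton with the same `c` and `D`, i.e.
`P = cI + (1/2)(D - JD^tJ)` and `Q = cI + (1/2)(D + D^t)`. -/
theorem algebraic_soliton {V : Type*} [NormedAddCommGroup V] [InnerProductSpace ℝ V]
    [FiniteDimensional ℝ V]
    -- the Lie bracket
    (L : V →L[ℝ] V →L[ℝ] V)
    (halt : ∀ X : V, L X X = 0)
    (hjac : ∀ X Y Z : V, L X (L Y Z) + L Y (L Z X) + L Z (L X Y) = 0)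
    (J P Q D : V →L[ℝ] V) (c : ℝ)
    (hJ2 : J ∘L J = -1)
    (hJadj : ContinuousLinearMap.adjoint J = -J)
    -- `P^{t_ω} = P`, i.e. `P^t = -JPJ`
    (hPt : ContinuousLinearMap.adjoint P = -(J ∘L P ∘L J))
    -- `Q^t = Q`
    (hQt : ContinuousLinearMap.adjoint Q = Q)
    -- compatibility `P^c = Q^c`
    (hcomp : P - J ∘L P ∘L J = Q - J ∘L Q ∘L J)
    -- `D` is a derivation
    (hD : ∀ X Y : V, D (L X Y) = L (D X) Y + L X (D Y))
    -- the hypothesis `P + Q^{ac} = cI + D`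
    (hyp : P + (1/2 : ℝ) • (Q + J ∘L Q ∘L J) = c • (1 : V →L[ℝ] V) + D) :
    P = c • (1 : V →L[ℝ] V)
        + (1/2 : ℝ) • (D - J ∘L (ContinuousLinearMap.adjoint D) ∘L J) ∧
    Q = c • (1 : V →L[ℝ] V) + (1/2 : ℝ) • (D + ContinuousLinearMap.adjoint D) :=
  algebraic_soliton_general L J P Q D c hJ2 hJadj hPt hQt hcomp hyp
end

section
/- Along the Chern-Ricci flow ω(t) = ω₀((I - 2tP₀)·,·) on a Lie group, the Chern-Ricci operator evolves by P(t) = (I - 2tP₀)⁻¹P₀. Consequently, if P₀ has eigenvalues p₁,…,p_{2n}, the Chern scalar curvature is tr P(t) = Σᵢ pᵢ/(1 - 2tpᵢ), its derivative is Σᵢ 2pᵢ²/(1-2tpᵢ)² ≥ 0, so tr P(t) is non-decreasing, and strictly increasing unless P₀ = 0. Moreover, if T₊ < ∞ then ∫₀^{T₊} tr P(t) dt = ∞ and tr P(t) ≤ C/(T₊ - t) for some C > 0. -/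
/-!
In an eigenbasis of `P₀` the operator `I - 2tP₀` is diagonal with entries `1 - 2tpᵢ`, so it is
invertible on the admissible times and `P(t)` is diagonal with entries `pᵢ / (1 - 2tpᵢ)`; all
remaining claims concern this explicit function of `t`. A primitive of it is
`-½ Σᵢ log (1 - 2tpᵢ)`, and `log x ≤ x - 1` gives `-½ log (1 - 2tpᵢ) ≥ tpᵢ`, so the primitive
dominates the term of the top eigenvalue `p₊` up to a linear function of `t`; that term tends to
`∞` as `t → T₊`. The bound `C / (T₊ - t)` comes from `pᵢ / (1 - 2tpᵢ) ≤ p₊ / (1 - 2tp₊)` for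
`t ≥ 0`, which after clearing denominators is just `pᵢ ≤ p₊`.
-/

open Filter Topology

theorem LinearMap.trace_eq_sum_of_apply_basis_eq_smul {ι R M : Type*} [Fintype ι] [CommRing R]
    [AddCommGroup M] [Module R M] (b : Module.Basis ι R M) {f : M →ₗ[R] M} {d : ι → R}
    (hf : ∀ i, f (b i) = d i • b i) : LinearMap.trace R M f = ∑ i, d i := by
  classical
  rw [LinearMap.trace_eq_matrix_trace R b, Matrix.trace]
  simp [LinearMap.toMatrix_apply, hf]

namespace ContinuousLinearMap

variable {ι 𝕜 E : Type*} [NontriviallyNormedField 𝕜] [NormedAddCommGroup E] [NormedSpace 𝕜 E]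

theorem eq_inverse_comp_of_comp_eq {a x y : E →L[𝕜] E} (ha : IsUnit a) (h : a ∘L x = y) :
    x = Ring.inverse a ∘L y := by
  rw [← h, ← mul_def, ← mul_def, Ring.inverse_mul_cancel_left _ _ ha]

variable (b : Module.Basis ι 𝕜 E) {f g h : E →L[𝕜] E} {d c : ι → 𝕜}

theorem exists_ne_zero_of_apply_basis_eq_smul (hf : ∀ i, f (b i) = d i • b i) (hf0 : f ≠ 0) :
    ∃ i, d i ≠ 0 := by
  by_contra! hd
  exact hf0 (coe_injective (b.ext fun i => by simp [hf, hd]))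

variable [CompleteSpace E]

theorem isUnit_of_apply_basis_eq_smul (hf : ∀ i, f (b i) = d i • b i) (hd : ∀ i, d i ≠ 0) :
    IsUnit f := by
  let u := b.equiv (b.unitsSMul fun i => Units.mk0 (d i) (hd i)) (Equiv.refl ι)
  have hfu : (f : E →ₗ[𝕜] E) = u := b.ext fun i => by simp [u, hf, Module.Basis.unitsSMul_apply]
  rw [isUnit_iff_bijective, ← coe_coe, hfu]
  exact u.bijective

theorem apply_basis_eq_div_smul_of_comp_eq (hf : ∀ i, f (b i) = d i • b i) (hd : ∀ i, d i ≠ 0)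
    (hg : ∀ i, g (b i) = c i • b i) (hfhg : f ∘L h = g) (i : ι) :
    h (b i) = (c i / d i) • b i := by
  apply (isUnit_iff_bijective.1 (isUnit_of_apply_basis_eq_smul b hf hd)).1
  rw [← comp_apply, hfhg, hg, map_smul, hf, smul_smul, div_mul_cancel₀ _ (hd i)]

end ContinuousLinearMap

section ScalarCurvature

open Real

variable {ι : Type*} (e : ι → ℝ)

def admissibleTimes : Set ℝ := {t | ∀ i, 0 < 1 - 2 * t * e i}

theorem convex_admissibleTimes : Convex ℝ (admissibleTimes e) := by
  refine convex_iff_ordConnected.2 ⟨fun x hx y hy t ht i => ?_⟩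
  rcases le_total 0 (e i) with hei | hei
  · nlinarith [hy i, ht.2]
  · nlinarith [hx i, ht.1]

theorem zero_mem_admissibleTimes : (0 : ℝ) ∈ admissibleTimes e := fun i => by simp

variable {e} in
theorem mem_admissibleTimes_of_le {p t : ℝ} (hle : ∀ i, e i ≤ p) (ht : 0 ≤ t)
    (hpt : 0 < 1 - 2 * t * p) : t ∈ admissibleTimes e := fun i => by
  nlinarith [mul_le_mul_of_nonneg_left (hle i) ht]

variable [Fintype ι]

theorem isOpen_admissibleTimes : IsOpen (admissibleTimes e) := by
  rw [admissibleTimes, Set.ofPred_forall]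
  exact isOpen_iInter_of_finite fun i => isOpen_lt continuous_const (by fun_prop)

noncomputable def chernScalar (t : ℝ) : ℝ := ∑ i, e i / (1 - 2 * t * e i)

noncomputable def chernScalarPrimitive (t : ℝ) : ℝ := ∑ i, -log (1 - 2 * t * e i) / 2

variable {e}

theorem hasDerivAt_one_sub_two_mul_mul (a t : ℝ) :
    HasDerivAt (fun s => 1 - 2 * s * a) (-(2 * a)) t := by
  simpa using (((hasDerivAt_id t).const_mul 2).mul_const a).const_sub 1

theorem hasDerivAt_div_one_sub {a t : ℝ} (ht : 1 - 2 * t * a ≠ 0) :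
    HasDerivAt (fun s => a / (1 - 2 * s * a)) (2 * a ^ 2 / (1 - 2 * t * a) ^ 2) t :=
  ((hasDerivAt_const t a).fun_div (hasDerivAt_one_sub_two_mul_mul a t) ht).congr_deriv (by ring)

theorem hasDerivAt_neg_log_one_sub_div_two {a t : ℝ} (ht : 1 - 2 * t * a ≠ 0) :
    HasDerivAt (fun s => -log (1 - 2 * s * a) / 2) (a / (1 - 2 * t * a)) t :=
  ((hasDerivAt_one_sub_two_mul_mul a t).log ht).neg.div_const 2 |>.congr_deriv (by ring)

theorem hasDerivAt_chernScalar {t : ℝ} (ht : t ∈ admissibleTimes e) :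
    HasDerivAt (chernScalar e) (∑ i, 2 * e i ^ 2 / (1 - 2 * t * e i) ^ 2) t :=
  HasDerivAt.fun_sum fun i _ => hasDerivAt_div_one_sub (ht i).ne'

theorem continuousOn_chernScalar : ContinuousOn (chernScalar e) (admissibleTimes e) :=
  fun _ ht => (hasDerivAt_chernScalar ht).continuousAt.continuousWithinAt

theorem hasDerivWithinAt_chernScalar_interior :
    ∀ t ∈ interior (admissibleTimes e), HasDerivWithinAt (chernScalar e)
      (∑ i, 2 * e i ^ 2 / (1 - 2 * t * e i) ^ 2) (interior (admissibleTimes e)) t := by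
  rw [(isOpen_admissibleTimes e).interior_eq]
  exact fun t ht => (hasDerivAt_chernScalar ht).hasDerivWithinAt

theorem monotoneOn_chernScalar : MonotoneOn (chernScalar e) (admissibleTimes e) :=
  monotoneOn_of_hasDerivWithinAt_nonneg (convex_admissibleTimes e) continuousOn_chernScalar
    hasDerivWithinAt_chernScalar_interior fun t _ => Finset.sum_nonneg fun i _ => by positivity

theorem strictMonoOn_chernScalar (he : ∃ i, e i ≠ 0) :
    StrictMonoOn (chernScalar e) (admissibleTimes e) := by
  obtain ⟨i₀, hi₀⟩ := he
  refine strictMonoOn_of_hasDerivWithinAt_pos (convex_admissibleTimes e) continuousOn_chernScalar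
    hasDerivWithinAt_chernScalar_interior fun t ht => ?_
  rw [(isOpen_admissibleTimes e).interior_eq] at ht
  have hterm : 0 < 2 * e i₀ ^ 2 / (1 - 2 * t * e i₀) ^ 2 := by
    have := ht i₀
    positivity
  exact Finset.sum_pos' (fun i _ => by positivity) ⟨i₀, Finset.mem_univ _, hterm⟩

theorem hasDerivAt_chernScalarPrimitive {t : ℝ} (ht : t ∈ admissibleTimes e) :
    HasDerivAt (chernScalarPrimitive e) (chernScalar e t) t :=
  HasDerivAt.fun_sum fun i _ => hasDerivAt_neg_log_one_sub_div_two (ht i).ne'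

theorem integral_chernScalar {t : ℝ} (ht : t ∈ admissibleTimes e) :
    ∫ s in (0 : ℝ)..t, chernScalar e s = chernScalarPrimitive e t := by
  have hsub : Set.uIcc 0 t ⊆ admissibleTimes e :=
    (convex_admissibleTimes e).ordConnected.uIcc_subset (zero_mem_admissibleTimes e) ht
  rw [intervalIntegral.integral_eq_sub_of_hasDerivAt
    (fun s hs => hasDerivAt_chernScalarPrimitive (hsub hs))
    (ContinuousOn.intervalIntegrable fun s hs =>
      (hasDerivAt_chernScalar (hsub hs)).continuousAt.continuousWithinAt)]
  simp [chernScalarPrimitive]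

theorem le_chernScalarPrimitive {t : ℝ} (ht : t ∈ admissibleTimes e) (i₀ : ι) :
    -log (1 - 2 * t * e i₀) / 2 - t * e i₀ + t * ∑ i, e i ≤ chernScalarPrimitive e t := by
  have hnonneg : ∀ i, 0 ≤ -log (1 - 2 * t * e i) / 2 - t * e i := fun i => by
    linarith [log_le_sub_one_of_pos (ht i)]
  have hsingle := Finset.single_le_sum (fun i _ => hnonneg i) (Finset.mem_univ i₀)
  rw [Finset.sum_sub_distrib, ← Finset.mul_sum] at hsingle
  unfold chernScalarPrimitive
  linarith

theorem one_sub_two_mul_pos {p t : ℝ} (hp : 0 < p) (ht : t < 1 / (2 * p)) :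
    0 < 1 - 2 * t * p := by
  rw [lt_div_iff₀ (by positivity)] at ht
  linarith

theorem tendsto_integral_chernScalar_atTop {p : ℝ} (hp : 0 < p) {i₀ : ι} (hi₀ : e i₀ = p)
    (hle : ∀ i, e i ≤ p) :
    Tendsto (fun s => ∫ t in (0 : ℝ)..s, chernScalar e t) (𝓝[<] (1 / (2 * p))) atTop := by
  set T := 1 / (2 * p)
  have hgap : Tendsto (fun s => 1 - 2 * s * p) (𝓝[<] T) (𝓝[>] 0) := by
    refine tendsto_nhdsWithin_of_tendsto_nhds_of_eventually_within _ ?_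
      (eventually_nhdsWithin_of_forall fun s hs => one_sub_two_mul_pos hp hs)
    have hT : 1 - 2 * T * p = 0 := by
      simp only [T]
      field_simp
      ring
    exact ((by fun_prop : Continuous fun s => 1 - 2 * s * p).tendsto' T 0 hT).mono_left
      nhdsWithin_le_nhds
  have hlog : Tendsto (fun s => -log (1 - 2 * s * p) / 2) (𝓝[<] T) atTop :=
    (tendsto_neg_atBot_atTop.comp (tendsto_log_nhdsGT_zero.comp hgap)).atTop_div_const two_pos
  have hlin : Tendsto (fun s => -(s * p) + s * ∑ i, e i) (𝓝[<] T)
      (𝓝 (-(T * p) + T * ∑ i, e i)) :=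
    ((by fun_prop : Continuous fun s => -(s * p) + s * ∑ i, e i).tendsto T).mono_left
      nhdsWithin_le_nhds
  refine tendsto_atTop_mono' _ ?_ (hlog.atTop_add hlin)
  filter_upwards [Ioo_mem_nhdsLT (by positivity : 0 < T)] with s hs
  have hs' := mem_admissibleTimes_of_le hle hs.1.le (one_sub_two_mul_pos hp hs.2)
  rw [integral_chernScalar hs']
  have hbound := le_chernScalarPrimitive hs' i₀
  rw [hi₀] at hbound
  linarith

theorem chernScalar_le {p t : ℝ} (hle : ∀ i, e i ≤ p) (ht : 0 ≤ t) (hpt : 0 < 1 - 2 * t * p) :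
    chernScalar e t ≤ Fintype.card ι * (p / (1 - 2 * t * p)) := by
  have hterm : ∀ i, e i / (1 - 2 * t * e i) ≤ p / (1 - 2 * t * p) := fun i => by
    rw [div_le_div_iff₀ (mem_admissibleTimes_of_le hle ht hpt i) hpt]
    nlinarith [hle i]
  calc chernScalar e t ≤ ∑ _i : ι, p / (1 - 2 * t * p) := Finset.sum_le_sum fun i _ => hterm i
    _ = Fintype.card ι * (p / (1 - 2 * t * p)) := by simp

theorem exists_chernScalar_le_div [Nonempty ι] {p : ℝ} (hp : 0 < p) (hle : ∀ i, e i ≤ p) :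
    ∃ C > 0, ∀ t ∈ Set.Ico 0 (1 / (2 * p)), chernScalar e t ≤ C / (1 / (2 * p) - t) := by
  refine ⟨Fintype.card ι / 2, by positivity, fun t ⟨ht0, htT⟩ => ?_⟩
  have hpt := one_sub_two_mul_pos hp htT
  calc chernScalar e t ≤ Fintype.card ι * (p / (1 - 2 * t * p)) := chernScalar_le hle ht0 hpt
    _ = Fintype.card ι / 2 / (1 / (2 * p) - t) := by
      field_simp

end ScalarCurvature

theorem chern_scalar_evolution_general {V : Type*} [NormedAddCommGroup V]
    [InnerProductSpace ℝ V] [FiniteDimensional ℝ V]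
    (m : ℕ) (P₀ : V →L[ℝ] V)
    -- an orthonormal eigenbasis of `P₀` with eigenvalues `e i`
    (b : OrthonormalBasis (Fin m) ℝ V) (e : Fin m → ℝ)
    (heig : ∀ i, P₀ (b i) = e i • b i)
    -- `P(t)`, the Chern-Ricci operator of `ω(t)`, determined by `(I - 2tP₀)P(t) = P₀`
    (P : ℝ → (V →L[ℝ] V))
    (hP : ∀ t : ℝ, (∀ i, 0 < 1 - 2*t*(e i)) → (1 - (2*t) • P₀) ∘L P t = P₀) :
    (∀ t : ℝ, (∀ i, 0 < 1 - 2*t*(e i)) →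
      P t = Ring.inverse (1 - (2*t) • P₀) ∘L P₀) ∧
    (∀ t : ℝ, (∀ i, 0 < 1 - 2*t*(e i)) →
      LinearMap.trace ℝ V ((P t : V →L[ℝ] V) : V →ₗ[ℝ] V)
        = ∑ i, e i / (1 - 2*t*(e i))) ∧
    (∀ t : ℝ, (∀ i, 0 < 1 - 2*t*(e i)) →
      HasDerivAt (fun s : ℝ => ∑ i, e i / (1 - 2*s*(e i)))
        (∑ i, 2*(e i)^2 / (1 - 2*t*(e i))^2) t ∧
      0 ≤ ∑ i, 2*(e i)^2 / (1 - 2*t*(e i))^2) ∧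
    MonotoneOn (fun s : ℝ => ∑ i, e i / (1 - 2*s*(e i)))
      {t : ℝ | ∀ i, 0 < 1 - 2*t*(e i)} ∧
    (P₀ ≠ 0 → StrictMonoOn (fun s : ℝ => ∑ i, e i / (1 - 2*s*(e i)))
      {t : ℝ | ∀ i, 0 < 1 - 2*t*(e i)}) ∧
    (∀ pPlus : ℝ, 0 < pPlus → (∃ i, e i = pPlus) → (∀ i, e i ≤ pPlus) →
      Filter.Tendsto (fun s : ℝ => ∫ t in (0:ℝ)..s, ∑ i, e i / (1 - 2*t*(e i)))
        (nhdsWithin (1/(2*pPlus)) (Set.Iio (1/(2*pPlus)))) Filter.atTop ∧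
      ∃ C > 0, ∀ t ∈ Set.Ico (0:ℝ) (1/(2*pPlus)),
        (∑ i, e i / (1 - 2*t*(e i))) ≤ C / (1/(2*pPlus) - t)) := by
  have hflow : ∀ t i, (1 - (2 * t) • P₀) (b i) = (1 - 2 * t * e i) • b i :=
    fun t i => by simp [heig, sub_smul, smul_smul]
  have hunit : ∀ t ∈ admissibleTimes e, IsUnit (1 - (2 * t) • P₀) := fun t ht =>
    ContinuousLinearMap.isUnit_of_apply_basis_eq_smul b.toBasis (hflow t) fun i => (ht i).ne'
  refine ⟨fun t ht => ContinuousLinearMap.eq_inverse_comp_of_comp_eq (hunit t ht) (hP t ht),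
    fun t ht => ?_,
    fun t ht => ⟨hasDerivAt_chernScalar ht, Finset.sum_nonneg fun i _ => by positivity⟩,
    monotoneOn_chernScalar,
    fun hP₀ => strictMonoOn_chernScalar
      (ContinuousLinearMap.exists_ne_zero_of_apply_basis_eq_smul b.toBasis heig hP₀),
    fun p hp ⟨i₀, hi₀⟩ hle => ⟨tendsto_integral_chernScalar_atTop hp hi₀ hle,
      have : Nonempty (Fin m) := ⟨i₀⟩
      exists_chernScalar_le_div hp hle⟩⟩
  exact LinearMap.trace_eq_sum_of_apply_basis_eq_smul b.toBasis
    (ContinuousLinearMap.apply_basis_eq_div_smul_of_comp_eq b.toBasis (hflow t)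
      (fun i => (ht i).ne') heig (hP t ht))

/-- Along the Chern-Ricci flow `ω(t) = ω₀((I - 2tP₀)·,·)`, the Chern-Ricci operator
evolves by `P(t) = (I - 2tP₀)⁻¹P₀`; with eigenvalues `pᵢ` of `P₀`, the Chern scalar
curvature is `tr P(t) = Σᵢ pᵢ/(1-2tpᵢ)`, its derivative `Σᵢ 2pᵢ²/(1-2tpᵢ)² ≥ 0`, so it
is non-decreasing, strictly increasing unless `P₀ = 0`; and if `T₊ = 1/(2p₊) < ∞` then
`∫₀^{T₊} tr P dt = ∞` and `tr P(t) ≤ C/(T₊ - t)`. -/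
theorem chern_scalar_evolution {V : Type*} [NormedAddCommGroup V]
    [InnerProductSpace ℝ V] [FiniteDimensional ℝ V]
    (m : ℕ) (P₀ : V →L[ℝ] V)
    (hsym : ContinuousLinearMap.adjoint P₀ = P₀)
    -- an orthonormal eigenbasis of `P₀` with eigenvalues `e i`
    (b : OrthonormalBasis (Fin m) ℝ V) (e : Fin m → ℝ)
    (heig : ∀ i, P₀ (b i) = e i • b i)
    -- `P(t)`, the Chern-Ricci operator of `ω(t)`, determined by `(I - 2tP₀)P(t) = P₀`
    (P : ℝ → (V →L[ℝ] V))
    (hP : ∀ t : ℝ, (∀ i, 0 < 1 - 2*t*(e i)) → (1 - (2*t) • P₀) ∘L P t = P₀) :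
    (∀ t : ℝ, (∀ i, 0 < 1 - 2*t*(e i)) →
      P t = Ring.inverse (1 - (2*t) • P₀) ∘L P₀) ∧
    (∀ t : ℝ, (∀ i, 0 < 1 - 2*t*(e i)) →
      LinearMap.trace ℝ V ((P t : V →L[ℝ] V) : V →ₗ[ℝ] V)
        = ∑ i, e i / (1 - 2*t*(e i))) ∧
    (∀ t : ℝ, (∀ i, 0 < 1 - 2*t*(e i)) →
      HasDerivAt (fun s : ℝ => ∑ i, e i / (1 - 2*s*(e i)))
        (∑ i, 2*(e i)^2 / (1 - 2*t*(e i))^2) t ∧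
      0 ≤ ∑ i, 2*(e i)^2 / (1 - 2*t*(e i))^2) ∧
    MonotoneOn (fun s : ℝ => ∑ i, e i / (1 - 2*s*(e i)))
      {t : ℝ | ∀ i, 0 < 1 - 2*t*(e i)} ∧
    (P₀ ≠ 0 → StrictMonoOn (fun s : ℝ => ∑ i, e i / (1 - 2*s*(e i)))
      {t : ℝ | ∀ i, 0 < 1 - 2*t*(e i)}) ∧
    (∀ pPlus : ℝ, 0 < pPlus → (∃ i, e i = pPlus) → (∀ i, e i ≤ pPlus) →
      Filter.Tendsto (fun s : ℝ => ∫ t in (0:ℝ)..s, ∑ i, e i / (1 - 2*t*(e i)))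
        (nhdsWithin (1/(2*pPlus)) (Set.Iio (1/(2*pPlus)))) Filter.atTop ∧
      ∃ C > 0, ∀ t ∈ Set.Ico (0:ℝ) (1/(2*pPlus)),
        (∑ i, e i / (1 - 2*t*(e i))) ≤ C / (1/(2*pPlus) - t)) :=
  chern_scalar_evolution_general m P₀ b e heig P hP
end

section
/- Let P be a symmetric operator on a Lie algebra g (with inner product) such that P = cI + D for some c ≠ 0 and derivation D of g, and suppose the eigenvalues of P are contained in {0, c}. Then k := Ker P is an abelian ideal of g and its orthogonal complement k^⊥ (the c-eigenspace of P) is a Lie subalgebra, so g = k^⊥ ⋉ k. -/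
/-!
Since `D = P - cI` is a derivation, eigenvalues of `D` add under the bracket, so the bracket of
a `μ`- and a `ν`-eigenvector of `P` is a `(μ + ν - c)`-eigenvector. With spectrum in `{0, c}` this
gives `[k, k] ⊆ E_{-c} = 0`, `[E_c, k] ⊆ k` and `[E_c, E_c] ⊆ E_c`; by the spectral theorem
`g = k ⊕ E_c` orthogonally, so `kᗮ = E_c`.
-/

open scoped RealInnerProductSpace

open Module.End

theorem apply_mem_eigenspace_add_sub {R M : Type*} [CommRing R] [AddCommGroup M] [Module R M]
    {L : M →ₗ[R] M →ₗ[R] M} {P : Module.End R M} {c : R}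
    (hder : ∀ X Y : M, P (L X Y) - c • L X Y = L (P X - c • X) Y + L X (P Y - c • Y))
    {μ ν : R} {X Y : M} (hX : X ∈ eigenspace P μ) (hY : Y ∈ eigenspace P ν) :
    L X Y ∈ eigenspace P (μ + ν - c) := by
  rw [mem_eigenspace_iff] at hX hY ⊢
  have h := hder X Y
  rw [hX, hY, ← sub_smul, ← sub_smul, map_smul, LinearMap.smul_apply, map_smul,
    sub_eq_iff_eq_add] at h
  rw [h]
  module

namespace LinearMap.IsSymmetric

variable {V : Type*} [NormedAddCommGroup V] [InnerProductSpace ℝ V] {P : V →ₗ[ℝ] V}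

theorem ker_sup_eigenspace_eq_top [FiniteDimensional ℝ V] (hP : P.IsSymmetric) {c : ℝ}
    (hspec : ∀ r : ℝ, HasEigenvalue P r → r = 0 ∨ r = c) :
    LinearMap.ker P ⊔ eigenspace P c = ⊤ := by
  rw [eq_top_iff, ← Submodule.orthogonal_eq_bot_iff.mp
    hP.orthogonalComplement_iSup_eigenspaces_eq_bot]
  refine iSup_le fun μ => ?_
  by_cases hμ : HasEigenvalue P μ
  · rcases hspec μ hμ with rfl | rfl
    · exact eigenspace_zero P ▸ le_sup_left
    · exact le_sup_right
  · rw [hasEigenvalue_iff, not_not] at hμ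
    exact hμ ▸ bot_le

theorem orthogonal_ker_eq_eigenspace [FiniteDimensional ℝ V] (hP : P.IsSymmetric) {c : ℝ}
    (hc : c ≠ 0) (hspec : ∀ r : ℝ, HasEigenvalue P r → r = 0 ∨ r = c) :
    (LinearMap.ker P)ᗮ = eigenspace P c := by
  have hle : eigenspace P c ≤ (LinearMap.ker P)ᗮ :=
    Submodule.isOrtho_iff_le.mp (eigenspace_zero P ▸ hP.orthogonalFamily_eigenspaces.isOrtho hc)
  refine (eq_of_le_of_inf_le_of_sup_le hle (z := LinearMap.ker P) ?_ ?_).symm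
  · rw [inf_comm, (LinearMap.ker P).isCompl_orthogonal.inf_eq_bot]
    exact bot_le
  · rw [sup_comm (eigenspace P c), ker_sup_eigenspace_eq_top hP hspec]
    exact le_top

end LinearMap.IsSymmetric

theorem chern_ricci_soliton_structure_general {V : Type*} [NormedAddCommGroup V]
    [InnerProductSpace ℝ V] [FiniteDimensional ℝ V]
    -- the Lie bracket
    (L : V →ₗ[ℝ] V →ₗ[ℝ] V)
    (P : V →ₗ[ℝ] V) (c : ℝ) (hc : c ≠ 0)
    (hsym : ∀ X Y : V, ⟪P X, Y⟫ = ⟪X, P Y⟫)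
    -- `D := P - cI` is a derivation
    (hder : ∀ X Y : V, P (L X Y) - c • L X Y
      = L (P X - c • X) Y + L X (P Y - c • Y))
    -- the eigenvalues of `P` are contained in `{0, c}`
    (hspec : ∀ r : ℝ, Module.End.HasEigenvalue P r → r = 0 ∨ r = c) :
    (∀ X ∈ LinearMap.ker P, ∀ Y ∈ LinearMap.ker P, L X Y = 0) ∧
    (∀ X : V, ∀ Y ∈ LinearMap.ker P, L X Y ∈ LinearMap.ker P) ∧
    (∀ X ∈ (LinearMap.ker P)ᗮ, ∀ Y ∈ (LinearMap.ker P)ᗮ, L X Y ∈ (LinearMap.ker P)ᗮ) ∧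
    (LinearMap.ker P)ᗮ = Module.End.eigenspace P c ∧
    (LinearMap.ker P) ⊓ (LinearMap.ker P)ᗮ = ⊥ ∧
    (LinearMap.ker P) ⊔ (LinearMap.ker P)ᗮ = ⊤ := by
  have hP : P.IsSymmetric := hsym
  have horth := hP.orthogonal_ker_eq_eigenspace hc hspec
  have habel : ∀ X ∈ LinearMap.ker P, ∀ Y ∈ LinearMap.ker P, L X Y = 0 := by
    intro X hX Y hY
    rw [← eigenspace_zero] at hX hY
    have hbot : eigenspace P (0 + 0 - c) = ⊥ := by
      by_contra hne
      rcases hspec _ (hasEigenvalue_iff.mpr hne) with h | h <;> apply hc <;> linarith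
    simpa only [hbot, Submodule.mem_bot] using apply_mem_eigenspace_add_sub hder hX hY
  refine ⟨habel, fun X Y hY => ?_, fun X hX Y hY => ?_, horth,
    (LinearMap.ker P).isCompl_orthogonal.inf_eq_bot,
    (LinearMap.ker P).isCompl_orthogonal.sup_eq_top⟩
  · obtain ⟨X₀, hX₀, X₁, hX₁, rfl⟩ :=
      Submodule.mem_sup.mp (hP.ker_sup_eigenspace_eq_top hspec ▸ Submodule.mem_top (x := X))
    rw [map_add, LinearMap.add_apply, habel X₀ hX₀ Y hY, zero_add, ← eigenspace_zero]
    rw [← eigenspace_zero] at hY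
    simpa only [add_zero, sub_self] using apply_mem_eigenspace_add_sub hder hX₁ hY
  · rw [horth] at hX hY ⊢
    simpa only [add_sub_cancel_right] using apply_mem_eigenspace_add_sub hder hX hY

/-- Proposition 7.3 of the paper (structure of Chern-Ricci solitons): if `P` is a
symmetric operator on a metric Lie algebra with `P = cI + D` for a derivation `D` and
`c ≠ 0`, and the eigenvalues of `P` are contained in `{0, c}`, then `k = Ker P` is an
abelian ideal, its orthogonal complement `k^⊥` (the `c`-eigenspace of `P`) is a Lie
subalgebra, and `g = k^⊥ ⋉ k`. -/
theorem chern_ricci_soliton_structure {V : Type*} [NormedAddCommGroup V]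
    [InnerProductSpace ℝ V] [FiniteDimensional ℝ V]
    -- the Lie bracket
    (L : V →ₗ[ℝ] V →ₗ[ℝ] V)
    (halt : ∀ X : V, L X X = 0)
    (hjac : ∀ X Y Z : V, L X (L Y Z) + L Y (L Z X) + L Z (L X Y) = 0)
    (P : V →ₗ[ℝ] V) (c : ℝ) (hc : c ≠ 0)
    (hsym : ∀ X Y : V, ⟪P X, Y⟫ = ⟪X, P Y⟫)
    -- `D := P - cI` is a derivation
    (hder : ∀ X Y : V, P (L X Y) - c • L X Y
      = L (P X - c • X) Y + L X (P Y - c • Y))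
    -- the eigenvalues of `P` are contained in `{0, c}`
    (hspec : ∀ r : ℝ, Module.End.HasEigenvalue P r → r = 0 ∨ r = c) :
    (∀ X ∈ LinearMap.ker P, ∀ Y ∈ LinearMap.ker P, L X Y = 0) ∧
    (∀ X : V, ∀ Y ∈ LinearMap.ker P, L X Y ∈ LinearMap.ker P) ∧
    (∀ X ∈ (LinearMap.ker P)ᗮ, ∀ Y ∈ (LinearMap.ker P)ᗮ, L X Y ∈ (LinearMap.ker P)ᗮ) ∧
    (LinearMap.ker P)ᗮ = Module.End.eigenspace P c ∧
    (LinearMap.ker P) ⊓ (LinearMap.ker P)ᗮ = ⊥ ∧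
    (LinearMap.ker P) ⊔ (LinearMap.ker P)ᗮ = ⊤ :=
  chern_ricci_soliton_structure_general L P c hc hsym hder hspec
end

section
/- Consider the planar ODE system a' = (-9a² + (1/4)b² - 2ab)a, b' = (-3a² - (5/4)b² - 2ab)b with initial condition a₀, b₀ > 0. Then the solution exists for all t ≥ 0, stays in the open first quadrant, converges to (0,0) as t → ∞, and the normalized solution (a,b)/√(a²+b²) converges to (1,2)/√5 as t → ∞. -/
/-!
Measure time by `τ` with `dτ = a² dt`. In this time the ratio `s = a / b` obeys
`s' = -6 (s² - 1/4) / s`, so `s² = 1/4 + (s₀² - 1/4) e^{-12τ}` relaxes to `1/4`, and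
`(log a)' = -9 + 1/(4s²) - 2/s` integrates in closed form to
`log a = log a₀ - 12τ + (1/6) log (s/s₀) - (2/3) log ((s + 1/2)/(s₀ + 1/2))`.
Hence `a → 0`, `b = a/s → 0` and `b/a → 2` as `τ → ∞`. Going back to `t = ∫ a⁻² dτ`, an
increasing bijection of the time axis, turns this explicit curve into the solution.
-/

open Real Filter Set Topology

namespace BracketFlowExample

theorem tendsto_atTop_of_hasDerivAt_of_eventually_ge {f f' : ℝ → ℝ} {c : ℝ} (hc : 0 < c)
    (hf : ∀ x, HasDerivAt f (f' x) x) (hf' : ∀ᶠ x in atTop, c ≤ f' x) :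
    Tendsto f atTop atTop := by
  obtain ⟨x₀, hx₀⟩ := eventually_atTop.1 hf'
  have hgrowth : ∀ x ≥ x₀, c * (x - x₀) + f x₀ ≤ f x := fun x hx => by
    have := (convex_Ici x₀).mul_sub_le_image_sub_of_le_deriv
      (fun y _ => (hf y).continuousAt.continuousWithinAt)
      (fun y _ => (hf y).differentiableAt.differentiableWithinAt)
      (fun y hy => by rw [interior_Ici] at hy; exact (hf y).deriv ▸ hx₀ y hy.le)
      x₀ self_mem_Ici x hx hx
    linarith
  refine tendsto_atTop_mono' _ (eventually_ge_atTop x₀ |>.mono hgrowth) ?_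
  exact tendsto_atTop_add_const_right _ _
    ((tendsto_atTop_add_const_right _ _ tendsto_id).const_mul_atTop hc)

theorem tendsto_atBot_of_hasDerivAt_of_eventually_ge {f f' : ℝ → ℝ} {c : ℝ} (hc : 0 < c)
    (hf : ∀ x, HasDerivAt f (f' x) x) (hf' : ∀ᶠ x in atBot, c ≤ f' x) :
    Tendsto f atBot atBot := by
  obtain ⟨x₀, hx₀⟩ := eventually_atBot.1 hf'
  have hgrowth : ∀ x ≤ x₀, f x ≤ c * (x - x₀) + f x₀ := fun x hx => by
    have := (convex_Iic x₀).mul_sub_le_image_sub_of_le_deriv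
      (fun y _ => (hf y).continuousAt.continuousWithinAt)
      (fun y _ => (hf y).differentiableAt.differentiableWithinAt)
      (fun y hy => by rw [interior_Iic] at hy; exact (hf y).deriv ▸ hx₀ y hy.le)
      x hx x₀ self_mem_Iic hx
    linarith
  refine tendsto_atBot_mono' _ (eventually_le_atBot x₀ |>.mono hgrowth) ?_
  exact tendsto_atBot_add_const_right _ _
    ((tendsto_atBot_add_const_right _ _ tendsto_id).const_mul_atBot hc)

theorem exists_orderIso_hasDerivAt_symm {ρ : ℝ → ℝ} (hρ : Continuous ρ)
    (hρ_pos : ∀ x, 0 < ρ x) {c : ℝ} (hc : 0 < c) (htop : ∀ᶠ x in atTop, c ≤ ρ x)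
    (hbot : ∀ᶠ x in atBot, c ≤ ρ x) :
    ∃ g : ℝ ≃o ℝ, g 0 = 0 ∧ ∀ t, HasDerivAt g (ρ (g t))⁻¹ t := by
  let T : ℝ → ℝ := fun τ => ∫ σ in (0 : ℝ)..τ, ρ σ
  have hT : ∀ τ, HasDerivAt T (ρ τ) τ := fun τ => (hρ.integral_hasStrictDerivAt 0 τ).hasDerivAt
  have hT_cont : Continuous T := continuous_iff_continuousAt.2 fun τ => (hT τ).continuousAt
  let e := StrictMono.orderIsoOfSurjective T (strictMono_of_hasDerivAt_pos hT hρ_pos)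
    (hT_cont.surjective (tendsto_atTop_of_hasDerivAt_of_eventually_ge hc hT htop)
      (tendsto_atBot_of_hasDerivAt_of_eventually_ge hc hT hbot))
  refine ⟨e.symm, e.symm_apply_eq.2 intervalIntegral.integral_same.symm, fun t => ?_⟩
  exact (hT _).of_local_left_inverse e.symm.continuous.continuousAt (hρ_pos _).ne'
    (Eventually.of_forall e.apply_symm_apply)

theorem HasDerivAt.comp_timeChange {x g ρ : ℝ → ℝ} {v t : ℝ}
    (hx : HasDerivAt x (ρ (g t) * v) (g t)) (hg : HasDerivAt g (ρ (g t))⁻¹ t)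
    (hρ : ρ (g t) ≠ 0) : HasDerivAt (x ∘ g) v t := by
  simpa [mul_comm, hρ] using hx.comp t hg

noncomputable def fieldA (a b : ℝ) : ℝ := (-9 * a ^ 2 + (1 / 4) * b ^ 2 - 2 * a * b) * a

noncomputable def fieldB (a b : ℝ) : ℝ := (-3 * a ^ 2 - (5 / 4) * b ^ 2 - 2 * a * b) * b

section ExplicitSolution

variable (a₀ s₀ : ℝ)

noncomputable def ratioSq (τ : ℝ) : ℝ := 1 / 4 + (s₀ ^ 2 - 1 / 4) * exp (-12 * τ)

noncomputable def ratio (τ : ℝ) : ℝ := √(ratioSq s₀ τ)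

noncomputable def logA (τ : ℝ) : ℝ :=
  log a₀ - 12 * τ + (log (ratio s₀ τ) - log s₀) / 6
    - 2 / 3 * (log (ratio s₀ τ + 1 / 2) - log (s₀ + 1 / 2))

noncomputable def solA (τ : ℝ) : ℝ := exp (logA a₀ s₀ τ)

noncomputable def solB (τ : ℝ) : ℝ := solA a₀ s₀ τ / ratio s₀ τ

/-- `dt/dτ = solA⁻²` for `τ ≥ 0`, frozen for `τ < 0` (where `ratio` may vanish) so that it is
positive and continuous on all of `ℝ`. -/
noncomputable def timeWeight (τ : ℝ) : ℝ := exp (-2 * logA a₀ s₀ (max τ 0))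

lemma solA_pos (τ : ℝ) : 0 < solA a₀ s₀ τ := exp_pos _

lemma timeWeight_pos (τ : ℝ) : 0 < timeWeight a₀ s₀ τ := exp_pos _

lemma tendsto_ratio : Tendsto (ratio s₀) atTop (𝓝 (1 / 2)) := by
  have hexp : Tendsto (fun τ : ℝ => exp (-12 * τ)) atTop (𝓝 0) :=
    tendsto_exp_atBot.comp (tendsto_id.const_mul_atTop_of_neg (by norm_num))
  have := ((hexp.const_mul (s₀ ^ 2 - 1 / 4)).const_add (1 / 4)).sqrt
  rwa [mul_zero, add_zero,
    show √(1 / 4 : ℝ) = 1 / 2 by rw [sqrt_eq_iff_mul_self_eq] <;> norm_num] at this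

lemma tendsto_logA : Tendsto (logA a₀ s₀) atTop atBot := by
  have hlin : Tendsto (fun τ : ℝ => log a₀ + -12 * τ) atTop atBot :=
    tendsto_atBot_add_const_left _ _ (tendsto_id.const_mul_atTop_of_neg (by norm_num))
  have hs := tendsto_ratio s₀
  have hbdd := ((hs.log (by norm_num)).sub_const (log s₀) |>.div_const 6).sub
    (((hs.add_const (1 / 2)).log (by norm_num)).sub_const (log (s₀ + 1 / 2))
      |>.const_mul (2 / 3))
  exact (hlin.atBot_add hbdd).congr fun τ => by unfold logA; ring

lemma tendsto_solA : Tendsto (solA a₀ s₀) atTop (𝓝 0) :=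
  tendsto_exp_atBot.comp (tendsto_logA a₀ s₀)

lemma tendsto_solB : Tendsto (solB a₀ s₀) atTop (𝓝 0) := by
  have := (tendsto_solA a₀ s₀).div (tendsto_ratio s₀) (by norm_num)
  rwa [zero_div] at this

lemma tendsto_solB_div_solA :
    Tendsto (fun τ => solB a₀ s₀ τ / solA a₀ s₀ τ) atTop (𝓝 2) := by
  have := (tendsto_ratio s₀).inv₀ (by norm_num)
  rw [show (1 / 2 : ℝ)⁻¹ = 2 by norm_num] at this
  exact this.congr fun τ => (div_div_cancel_left' (solA_pos a₀ s₀ τ).ne').symm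

variable {a₀ s₀}

lemma ratioSq_pos (hs₀ : s₀ ≠ 0) {τ : ℝ} (hτ : 0 ≤ τ) : 0 < ratioSq s₀ τ := by
  have he : exp (-12 * τ) ≤ 1 := exp_le_one_iff.2 (by linarith)
  have : 0 < s₀ ^ 2 * exp (-12 * τ) := by positivity
  unfold ratioSq
  linarith

lemma ratio_pos (hs₀ : s₀ ≠ 0) {τ : ℝ} (hτ : 0 ≤ τ) : 0 < ratio s₀ τ :=
  sqrt_pos.2 (ratioSq_pos hs₀ hτ)

lemma ratio_zero (hs₀ : 0 ≤ s₀) : ratio s₀ 0 = s₀ := by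
  simp [ratio, ratioSq, sqrt_sq hs₀]

lemma solA_zero (ha₀ : 0 < a₀) (hs₀ : 0 ≤ s₀) : solA a₀ s₀ 0 = a₀ := by
  simp [solA, logA, ratio_zero hs₀, exp_log ha₀]

lemma solB_zero (ha₀ : 0 < a₀) (hs₀ : 0 ≤ s₀) : solB a₀ s₀ 0 = a₀ / s₀ := by
  rw [solB, solA_zero ha₀ hs₀, ratio_zero hs₀]

lemma solB_pos (hs₀ : s₀ ≠ 0) {τ : ℝ} (hτ : 0 ≤ τ) : 0 < solB a₀ s₀ τ :=
  div_pos (solA_pos a₀ s₀ τ) (ratio_pos hs₀ hτ)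

lemma hasDerivAt_ratioSq (τ : ℝ) :
    HasDerivAt (ratioSq s₀) (-12 * (ratioSq s₀ τ - 1 / 4)) τ := by
  have := (((hasDerivAt_id τ).const_mul (-12)).exp.const_mul (s₀ ^ 2 - 1 / 4)).const_add (1 / 4)
  exact this.congr_deriv (by simp only [ratioSq, id]; ring)

lemma hasDerivAt_ratio {τ : ℝ} (hτ : 0 < ratioSq s₀ τ) :
    HasDerivAt (ratio s₀) (-6 * (ratio s₀ τ ^ 2 - 1 / 4) / ratio s₀ τ) τ := by
  have hsq : ratio s₀ τ ^ 2 = ratioSq s₀ τ := sq_sqrt hτ.le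
  have hpos : 0 < ratio s₀ τ := sqrt_pos.2 hτ
  refine ((hasDerivAt_ratioSq τ).sqrt hτ.ne').congr_deriv ?_
  rw [← hsq, sqrt_sq hpos.le]
  field_simp
  ring

lemma hasDerivAt_logA {τ : ℝ} (hτ : 0 < ratioSq s₀ τ) :
    HasDerivAt (logA a₀ s₀) (-9 + 1 / (4 * ratio s₀ τ ^ 2) - 2 / ratio s₀ τ) τ := by
  have hpos : 0 < ratio s₀ τ := sqrt_pos.2 hτ
  have hs := hasDerivAt_ratio hτ
  have := (((hasDerivAt_const τ (log a₀)).sub ((hasDerivAt_id τ).const_mul 12)).add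
    (((hs.log hpos.ne').sub_const (log s₀)).div_const 6)).sub
    ((((hs.add_const (1 / 2)).log (by positivity)).sub_const (log (s₀ + 1 / 2))).const_mul
      (2 / 3))
  refine this.congr_deriv ?_
  field_simp
  ring

lemma hasDerivAt_solA {τ : ℝ} (hτ : 0 < ratioSq s₀ τ) :
    HasDerivAt (solA a₀ s₀)
      ((solA a₀ s₀ τ ^ 2)⁻¹ * fieldA (solA a₀ s₀ τ) (solB a₀ s₀ τ)) τ := by
  have hpos : 0 < ratio s₀ τ := sqrt_pos.2 hτ
  refine (hasDerivAt_logA hτ).exp.congr_deriv ?_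
  simp only [solB, fieldA, solA]
  field_simp

lemma hasDerivAt_solB {τ : ℝ} (hτ : 0 < ratioSq s₀ τ) :
    HasDerivAt (solB a₀ s₀)
      ((solA a₀ s₀ τ ^ 2)⁻¹ * fieldB (solA a₀ s₀ τ) (solB a₀ s₀ τ)) τ := by
  have hpos : 0 < ratio s₀ τ := sqrt_pos.2 hτ
  have hA := (solA_pos a₀ s₀ τ).ne'
  refine ((hasDerivAt_solA hτ).div (hasDerivAt_ratio hτ) hpos.ne').congr_deriv ?_
  simp only [solB, fieldA, fieldB]
  field_simp
  ring

lemma continuous_timeWeight (hs₀ : s₀ ≠ 0) : Continuous (timeWeight a₀ s₀) := by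
  refine continuous_exp.comp (continuous_const.mul ?_)
  refine continuous_iff_continuousAt.2 fun τ => ?_
  exact (hasDerivAt_logA (ratioSq_pos hs₀ (le_max_right τ 0))).continuousAt.comp
    (continuous_id.max continuous_const).continuousAt (f := fun σ : ℝ => max σ 0)

lemma timeWeight_of_nonneg {τ : ℝ} (hτ : 0 ≤ τ) :
    timeWeight a₀ s₀ τ = (solA a₀ s₀ τ ^ 2)⁻¹ := by
  rw [timeWeight, max_eq_left hτ, solA, ← exp_nat_mul, ← exp_neg]
  ring_nf

lemma eventually_timeWeight_ge_atTop :
    ∀ᶠ τ in atTop, timeWeight a₀ s₀ 0 ≤ timeWeight a₀ s₀ τ := by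
  filter_upwards [eventually_ge_atTop 0,
    (tendsto_logA a₀ s₀).eventually (eventually_le_atBot (logA a₀ s₀ 0))] with τ hτ hlog
  rw [timeWeight, timeWeight, max_self, max_eq_left hτ, exp_le_exp]
  linarith

lemma eventually_timeWeight_ge_atBot :
    ∀ᶠ τ in atBot, timeWeight a₀ s₀ 0 ≤ timeWeight a₀ s₀ τ := by
  filter_upwards [eventually_le_atBot 0] with τ hτ
  rw [timeWeight, timeWeight, max_self, max_eq_right hτ]

end ExplicitSolution

lemma normalize_eq_of_pos {a b : ℝ} (ha : 0 < a) :
    (a / √(a ^ 2 + b ^ 2), b / √(a ^ 2 + b ^ 2))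
      = (1 / √(1 + (b / a) ^ 2), b / a / √(1 + (b / a) ^ 2)) := by
  have h : a ^ 2 + b ^ 2 = a ^ 2 * (1 + (b / a) ^ 2) := by field_simp
  rw [h, sqrt_mul (sq_nonneg a), sqrt_sq ha.le]
  have : 0 < √(1 + (b / a) ^ 2) := by positivity
  ext <;> field_simp

lemma tendsto_normalize_of_tendsto_div {α : Type*} {l : Filter α} {a b : α → ℝ} {r : ℝ}
    (ha : ∀ᶠ x in l, 0 < a x) (hba : Tendsto (fun x => b x / a x) l (𝓝 r)) :
    Tendsto (fun x => (a x / √(a x ^ 2 + b x ^ 2), b x / √(a x ^ 2 + b x ^ 2))) l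
      (𝓝 (1 / √(1 + r ^ 2), r / √(1 + r ^ 2))) := by
  have hnorm := ((hba.pow 2).const_add 1).sqrt
  have hne : √(1 + r ^ 2) ≠ 0 := by positivity
  refine ((tendsto_const_nhds.div hnorm hne).prodMk_nhds (hba.div hnorm hne)).congr' ?_
  filter_upwards [ha] with x hx
  exact (normalize_eq_of_pos hx).symm

end BracketFlowExample

open BracketFlowExample in
/-- Example 8.3 of the paper: the bracket flow ODE system
`a' = (-9a² + (1/4)b² - 2ab)a`, `b' = (-3a² - (5/4)b² - 2ab)b` with `a₀, b₀ > 0` has a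
solution defined for all `t ≥ 0`, staying in the open first quadrant, converging to
`(0,0)`, with normalized solution converging to `(1,2)/√5` as `t → ∞`. -/
theorem scf_solvable_example (a₀ b₀ : ℝ) (ha₀ : 0 < a₀) (hb₀ : 0 < b₀) :
    ∃ a b : ℝ → ℝ, a 0 = a₀ ∧ b 0 = b₀ ∧
      (∀ t : ℝ, 0 ≤ t →
        HasDerivAt a ((-9*(a t)^2 + (1/4)*(b t)^2 - 2*(a t)*(b t)) * a t) t ∧
        HasDerivAt b ((-3*(a t)^2 - (5/4)*(b t)^2 - 2*(a t)*(b t)) * b t) t) ∧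
      (∀ t : ℝ, 0 ≤ t → 0 < a t ∧ 0 < b t) ∧
      Filter.Tendsto (fun t => (a t, b t)) Filter.atTop (nhds (0, 0)) ∧
      Filter.Tendsto
        (fun t => (a t / Real.sqrt ((a t)^2 + (b t)^2),
                   b t / Real.sqrt ((a t)^2 + (b t)^2)))
        Filter.atTop (nhds (1 / Real.sqrt 5, 2 / Real.sqrt 5)) := by
  set s₀ := a₀ / b₀
  have hs₀ : 0 < s₀ := div_pos ha₀ hb₀
  obtain ⟨g, hg₀, hg⟩ := exists_orderIso_hasDerivAt_symm (continuous_timeWeight hs₀.ne')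
    (timeWeight_pos a₀ s₀) (timeWeight_pos a₀ s₀ 0) eventually_timeWeight_ge_atTop
    eventually_timeWeight_ge_atBot
  have hg_nonneg {t : ℝ} (ht : 0 ≤ t) : 0 ≤ g t := hg₀ ▸ g.monotone ht
  have hτ {t : ℝ} (ht : 0 ≤ t) : 0 < ratioSq s₀ (g t) := ratioSq_pos hs₀.ne' (hg_nonneg ht)
  have hcomp {x : ℝ → ℝ} {v t : ℝ} (ht : 0 ≤ t)
      (hx : HasDerivAt x ((solA a₀ s₀ (g t) ^ 2)⁻¹ * v) (g t)) : HasDerivAt (x ∘ g) v t := by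
    rw [← timeWeight_of_nonneg (hg_nonneg ht)] at hx
    exact hx.comp_timeChange (hg t) (timeWeight_pos _ _ _).ne'
  refine ⟨solA a₀ s₀ ∘ g, solB a₀ s₀ ∘ g, ?_, ?_,
    fun t ht => ⟨hcomp ht (hasDerivAt_solA (hτ ht)), hcomp ht (hasDerivAt_solB (hτ ht))⟩,
    fun t ht => ⟨solA_pos _ _ _, solB_pos hs₀.ne' (hg_nonneg ht)⟩,
    ((tendsto_solA _ _).comp g.tendsto_atTop).prodMk_nhds
      ((tendsto_solB _ _).comp g.tendsto_atTop), ?_⟩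
  · simp [hg₀, solA_zero ha₀ hs₀.le]
  · simp [hg₀, solB_zero ha₀ hs₀.le, s₀, ha₀.ne']
  · have := tendsto_normalize_of_tendsto_div (.of_forall fun t => solA_pos _ _ _)
      ((tendsto_solB_div_solA a₀ s₀).comp g.tendsto_atTop)
    rwa [show (1 : ℝ) + 2 ^ 2 = 5 by norm_num] at this
end
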